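/- arXiv:2305.15361 — 10 statements merged into one kernel-verified Lean document; each statement's English description precedes it below -/
import Mathlib

section
/- Let α and β be irrational numbers with 1 < α < β and 1/α + 1/β = 1. Then for every positive integer n, ⌊nβ⌋ − ⌊nα⌋ = ⌊n(β/α − 1)⌋ + ⌊n(1 − α/β)⌋ + 1. -/
/-
Since `1/α + 1/β = 1`, we have `β/α = β - 1` and `α/β = α - 1`, so the right-hand side is
`⌊nβ - 2n⌋ + ⌊2n - nα⌋ + 1`. Integer shifts pass through the floor, and `⌊-x⌋ = -⌊x⌋ - 1`
for the irrational `x = nα`.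
-/

theorem Irrational.floor_intCast_sub {x : ℝ} (hx : Irrational x) (m : ℤ) :
    ⌊(m : ℝ) - x⌋ = m - ⌊x⌋ - 1 := by
  have hceil : ⌈x⌉ = ⌊x⌋ + 1 :=
    (Int.ceil_eq_floor_add_one_iff_notMem x).2 fun ⟨k, hk⟩ => hx.ne_int k hk.symm
  rw [sub_eq_add_neg, add_comm, Int.floor_add_intCast, Int.floor_neg, hceil]
  ring

theorem beatty_difference_decomposition_general
    (α β : ℝ) (hαirr : Irrational α)
    (hα : 1 < α) (hsum : 1 / α + 1 / β = 1) :
    ∀ n : ℕ, 0 < n →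
      ⌊(n : ℝ) * β⌋ - ⌊(n : ℝ) * α⌋ =
        ⌊(n : ℝ) * (β / α - 1)⌋ + ⌊(n : ℝ) * (1 - α / β)⌋ + 1 := by
  intro n hn
  have hαβ : α.HolderConjugate β := Real.holderConjugate_iff.2 ⟨hα, by simpa using hsum⟩
  have hβ_sub : (n : ℝ) * (β / α - 1) = n * β - ((2 * n : ℤ) : ℝ) := by
    rw [hαβ.symm.div_conj_eq_sub_one]; push_cast; ring
  have hα_sub : (n : ℝ) * (1 - α / β) = ((2 * n : ℤ) : ℝ) - n * α := by
    rw [hαβ.div_conj_eq_sub_one]; push_cast; ring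
  rw [hβ_sub, hα_sub, Int.floor_sub_intCast, (hαirr.natCast_mul hn.ne').floor_intCast_sub]
  ring

theorem beatty_difference_decomposition
    (α β : ℝ) (hαirr : Irrational α) (hβirr : Irrational β)
    (hα : 1 < α) (hαβ : α < β) (hsum : 1 / α + 1 / β = 1) :
    ∀ n : ℕ, 0 < n →
      ⌊(n : ℝ) * β⌋ - ⌊(n : ℝ) * α⌋ =
        ⌊(n : ℝ) * (β / α - 1)⌋ + ⌊(n : ℝ) * (1 - α / β)⌋ + 1 :=
  beatty_difference_decomposition_general α β hαirr hα hsum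
end

section
/- Let α be irrational with 1 < α < 2 and let β satisfy 1/α + 1/β = 1. Set a_n = ⌊nα⌋, b_n = ⌊nβ⌋, and let B = {⌊mβ⌋ : m ≥ 1}. Then for every positive integer n, the number of integers m ∈ B with a_n < m < b_n equals ⌊(2 − α)n⌋. -/
/-!
Since β > 1, `k ↦ ⌊kβ⌋` is strictly increasing. With `L = ⌊nα⌋`, multiplying by `α - 1`
and using `(α - 1)β = α` shows `⌊kβ⌋ > L ↔ k > L - n`, so the elements of `B` in
`(a_n, b_n)` are the `⌊kβ⌋` with `L - n < k < n`: there are `2n - 1 - L` of them.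
As `nα` is irrational, `⌊(2 - α)n⌋ = 2n - ⌈nα⌉ = 2n - 1 - L`.
-/

open Set

lemma Int.floor_intCast_sub_of_notMem {R : Type*} [Ring R] [LinearOrder R] [IsOrderedRing R]
    [FloorRing R] {a : R} (ha : a ∉ Set.range (Int.cast : ℤ → R)) (z : ℤ) :
    ⌊z - a⌋ = z - ⌊a⌋ - 1 := by
  rw [sub_eq_add_neg, Int.floor_intCast_add, Int.floor_neg,
    (Int.ceil_eq_floor_add_one_iff_notMem a).2 ha]
  ring

lemma beattySeq_strictMono {r : ℝ} (hr : 1 ≤ r) : StrictMono (beattySeq r) := by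
  intro j k hjk
  have hstep : (j : ℝ) * r + 1 ≤ k * r := by
    have : (j : ℝ) + 1 ≤ k := by exact_mod_cast hjk
    nlinarith
  calc beattySeq r j < ⌊(j : ℝ) * r⌋ + 1 := Int.lt_add_one_of_le le_rfl
    _ = ⌊(j : ℝ) * r + 1⌋ := (Int.floor_add_one _).symm
    _ ≤ beattySeq r k := Int.floor_le_floor hstep

lemma Real.HolderConjugate.beattySeq_lt_beattySeq_iff {α β : ℝ} (h : α.HolderConjugate β)
    (n k : ℤ) : beattySeq α n < beattySeq β k ↔ beattySeq α n - n < k := by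
  set L := beattySeq α n
  have hL : (L : ℝ) ≤ n * α := Int.floor_le _
  have hL' : (n : ℝ) * α < L + 1 := Int.lt_floor_add_one _
  have hconj : (α - 1) * β = α := h.sub_one_mul_conj
  have hα : 0 < α - 1 := h.sub_one_pos
  have hβ : 0 < β := h.symm.pos
  rw [beattySeq, ← Int.add_one_le_iff, Int.le_floor]
  push_cast
  constructor
  · intro hk
    by_contra! hkn
    have hkβ : (k : ℝ) * β ≤ (L - n) * β :=
      mul_le_mul_of_nonneg_right (by exact_mod_cast hkn) hβ.le
    have hscaled : ((L - n) * β - (L + 1)) * (α - 1) = L + 1 - (n + 1) * α := by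
      linear_combination (L - n : ℝ) * hconj
    have : (L - n) * β - (L + 1) < 0 := neg_of_mul_neg_left (by linarith) hα.le
    linarith
  · intro hk
    have hkβ : (L - n + 1) * β ≤ (k : ℝ) * β :=
      mul_le_mul_of_nonneg_right (by exact_mod_cast hk) hβ.le
    have hscaled : ((L - n + 1) * β - (L + 1)) * (α - 1) = L + 1 - n * α := by
      linear_combination (L - n + 1 : ℝ) * hconj
    have : 0 < (L - n + 1) * β - (L + 1) := pos_of_mul_pos_left (by linarith) hα.le
    linarith

lemma setOf_pos_image_between_eq_image_Ico {f : ℤ → ℤ} (hf : StrictMono f) {L c n : ℤ}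
    (hc : 0 < c) (hL : ∀ k, L < f k ↔ c ≤ k) :
    {m | (∃ k : ℕ, 0 < k ∧ m = f k) ∧ L < m ∧ m < f n} = f '' Ico c n := by
  ext m
  simp only [mem_ofPred_eq, mem_image, mem_Ico]
  constructor
  · rintro ⟨⟨k, -, rfl⟩, hLk, hkn⟩
    exact ⟨k, ⟨(hL k).1 hLk, hf.lt_iff_lt.1 hkn⟩, rfl⟩
  · rintro ⟨k, ⟨hck, hkn⟩, rfl⟩
    lift k to ℕ using by omega
    exact ⟨⟨k, by omega, rfl⟩, (hL k).2 hck, hf.lt_iff_lt.2 hkn⟩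

lemma Real.HolderConjugate.ncard_beattySeq_between {α β : ℝ} (h : α.HolderConjugate β)
    (n : ℕ) :
    {m | (∃ k : ℕ, 0 < k ∧ m = beattySeq β k) ∧
        beattySeq α n < m ∧ m < beattySeq β n}.ncard =
      (2 * n - beattySeq α n - 1).toNat := by
  have hmono := beattySeq_strictMono h.symm.lt.le
  have hn : (n : ℤ) ≤ beattySeq α n :=
    Int.le_floor.2 (by push_cast; nlinarith [h.lt, (n.cast_nonneg : (0 : ℝ) ≤ n)])
  rw [setOf_pos_image_between_eq_image_Ico hmono (c := beattySeq α n - n + 1) (by omega)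
      (fun k => by rw [h.beattySeq_lt_beattySeq_iff]; omega),
    ncard_image_of_injective _ hmono.injective, ← Finset.coe_Ico, ncard_coe_finset, Int.card_Ico]
  congr 1
  ring

theorem count_B_between_eq_floor
    (α β : ℝ) (hαirr : Irrational α)
    (hα1 : 1 < α) (hα2 : α < 2) (hsum : 1 / α + 1 / β = 1) :
    ∀ n : ℕ, 0 < n →
      ({m : ℤ | (∃ k : ℕ, 0 < k ∧ m = ⌊(k : ℝ) * β⌋) ∧
          ⌊(n : ℝ) * α⌋ < m ∧ m < ⌊(n : ℝ) * β⌋}.ncard : ℤ) =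
        ⌊(2 - α) * (n : ℝ)⌋ := by
  intro n hn
  have hαβ : α.HolderConjugate β :=
    Real.holderConjugate_iff.2 ⟨hα1, by simpa only [one_div] using hsum⟩
  have hnα : (n : ℝ) * α ∉ range Int.cast := fun ⟨m, hm⟩ =>
    (hαirr.natCast_mul hn.ne').ne_int m hm.symm
  have hlt : ⌊(n : ℝ) * α⌋ < 2 * n :=
    Int.floor_lt.2 (by push_cast; nlinarith [(Nat.cast_pos.2 hn : (0 : ℝ) < n)])
  have hcount := hαβ.ncard_beattySeq_between n
  simp only [beattySeq, Int.cast_natCast] at hcount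
  rw [hcount, show (2 - α) * n = ((2 * n : ℤ) : ℝ) - n * α by push_cast; ring,
    Int.floor_intCast_sub_of_notMem hnα]
  omega
end

section
/- Let α be irrational with 1 < α < 2 and let β satisfy 1/α + 1/β = 1. Set a_n = ⌊nα⌋, b_n = ⌊nβ⌋, and let A = {⌊mα⌋ : m ≥ 1}. Then for every positive integer n, the number of integers m ∈ A with a_n < m < b_n equals ⌊((2 − α)/(α − 1))·n⌋. -/
/-!
Here `β = α / (α - 1)`, so `n β = (n (β - 1)) α`. By Rayleigh's theorem `⌊k α⌋` never equals
`⌊n β⌋`, hence `⌊k α⌋ < ⌊n β⌋` iff `k α < n β` iff `k < n (β - 1)`. As `k ↦ ⌊k α⌋` is strictly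
increasing, the elements of `A` strictly between `a_n` and `b_n` are the `⌊k α⌋` with
`n < k < n (β - 1)`. Since `n (β - 1)` is irrational, there are `⌊n (β - 1)⌋ - n = ⌊n (β - 2)⌋`
of them, and `β - 2 = (2 - α) / (α - 1)`.
-/

theorem Int.floor_lt_floor_iff_of_ne {R : Type*} [Ring R] [LinearOrder R] [IsStrictOrderedRing R]
    [FloorRing R] {a b : R} (h : ⌊a⌋ ≠ ⌊b⌋) : ⌊a⌋ < ⌊b⌋ ↔ a < b :=
  ⟨Int.floor_mono.reflect_lt, fun hab => (Int.floor_mono hab.le).lt_of_ne h⟩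

theorem strictMono_floor_natCast_mul {r : ℝ} (hr : 1 ≤ r) :
    StrictMono fun k : ℕ => ⌊(k : ℝ) * r⌋ :=
  strictMono_nat_of_lt_succ fun k => by
    calc ⌊(k : ℝ) * r⌋ < ⌊(k : ℝ) * r + 1⌋ := by rw [Int.floor_add_one]; omega
      _ ≤ ⌊((k + 1 : ℕ) : ℝ) * r⌋ := Int.floor_mono (by push_cast; linarith)

namespace Real.HolderConjugate

variable {p q : ℝ}

theorem sub_one_mul_sub_one (h : p.HolderConjugate q) : (p - 1) * (q - 1) = 1 := by
  linear_combination h.mul_eq_add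

theorem mul_sub_one (h : p.HolderConjugate q) : p * (q - 1) = q := by
  linear_combination h.mul_eq_add

theorem irrational_sub_one (h : p.HolderConjugate q) (hp : Irrational p) : Irrational (q - 1) := by
  rw [eq_inv_of_mul_eq_one_right h.sub_one_mul_sub_one]
  simpa using (hp.sub_natCast 1).inv

theorem floor_mul_ne_floor_mul (h : p.HolderConjugate q) (hq : Irrational q) (k : ℤ) {n : ℤ}
    (hn : n ≠ 0) : ⌊k * p⌋ ≠ ⌊n * q⌋ := by
  have hnq : ⌊n * q⌋ = beattySeq' q n := by
    rw [beattySeq', (Int.ceil_eq_floor_add_one_iff_notMem _).2, add_sub_cancel_right]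
    exact fun ⟨m, hm⟩ => (hq.intCast_mul hn).ne_int m hm.symm
  intro hk
  have h1 : ⌊n * q⌋ ∈ {beattySeq' q k | k} := ⟨n, hnq.symm⟩
  rw [← compl_beattySeq h] at h1
  exact h1 ⟨k, hk⟩

theorem ncard_floor_mul_mem_Ioo (h : p.HolderConjugate q) (hp : Irrational p) {n : ℕ}
    (hn : 0 < n) :
    {m : ℤ | (∃ k : ℕ, 0 < k ∧ m = ⌊(k : ℝ) * p⌋) ∧
        ⌊(n : ℝ) * p⌋ < m ∧ m < ⌊(n : ℝ) * q⌋}.ncard = ⌊(n : ℝ) * (q - 1)⌋₊ - n := by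
  have hq₁ : Irrational ((n : ℝ) * (q - 1)) := (h.irrational_sub_one hp).natCast_mul hn.ne'
  have hq : Irrational q := by simpa using (h.irrational_sub_one hp).add_natCast 1
  have hmono := strictMono_floor_natCast_mul h.lt.le
  have lt_iff (k : ℕ) : ⌊(k : ℝ) * p⌋ < ⌊(n : ℝ) * q⌋ ↔ k ≤ ⌊(n : ℝ) * (q - 1)⌋₊ := by
    have hne := h.floor_mul_ne_floor_mul hq k (n := n) (by exact_mod_cast hn.ne')
    push_cast at hne
    have hnq : (n : ℝ) * q = p * (n * (q - 1)) := by rw [mul_left_comm, h.mul_sub_one]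
    have hq₁_nonneg : 0 ≤ (n : ℝ) * (q - 1) := by have := h.symm.sub_one_pos; positivity
    rw [Int.floor_lt_floor_iff_of_ne hne, hnq, mul_comm (k : ℝ), mul_lt_mul_iff_right₀ h.pos,
      Nat.le_floor_iff hq₁_nonneg, le_iff_lt_or_eq, or_iff_left (hq₁.ne_nat k).symm]
  have hS : {m : ℤ | (∃ k : ℕ, 0 < k ∧ m = ⌊(k : ℝ) * p⌋) ∧
      ⌊(n : ℝ) * p⌋ < m ∧ m < ⌊(n : ℝ) * q⌋} =
      (fun k : ℕ => ⌊(k : ℝ) * p⌋) '' Finset.Ioc n ⌊(n : ℝ) * (q - 1)⌋₊ := by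
    ext m
    simp only [Set.mem_ofPred_eq, Set.mem_image, Finset.coe_Ioc, Set.mem_Ioc]
    constructor
    · rintro ⟨⟨k, -, rfl⟩, hnk, hkq⟩
      exact ⟨k, ⟨hmono.lt_iff_lt.1 hnk, (lt_iff k).1 hkq⟩, rfl⟩
    · rintro ⟨k, ⟨hnk, hkq⟩, rfl⟩
      exact ⟨⟨k, by omega, rfl⟩, hmono hnk, (lt_iff k).2 hkq⟩
  rw [hS, Set.ncard_image_of_injective _ hmono.injective, Set.ncard_coe_finset, Nat.card_Ioc]

end Real.HolderConjugate

theorem count_A_between_eq_floor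
    (α β : ℝ) (hαirr : Irrational α)
    (hα1 : 1 < α) (hα2 : α < 2) (hsum : 1 / α + 1 / β = 1) :
    ∀ n : ℕ, 0 < n →
      ({m : ℤ | (∃ k : ℕ, 0 < k ∧ m = ⌊(k : ℝ) * α⌋) ∧
          ⌊(n : ℝ) * α⌋ < m ∧ m < ⌊(n : ℝ) * β⌋}.ncard : ℤ) =
        ⌊((2 - α) / (α - 1)) * (n : ℝ)⌋ := by
  intro n hn
  have h : α.HolderConjugate β :=
    Real.holderConjugate_iff.2 ⟨hα1, by simpa only [one_div] using hsum⟩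
  have hαβ := h.sub_one_mul_sub_one
  have hβ : 1 ≤ β - 1 := by nlinarith
  have hcoef : (2 - α) / (α - 1) * n = n * (β - 1) - n := by
    rw [div_mul_eq_mul_div, div_eq_iff h.sub_one_ne_zero]
    linear_combination -(n : ℝ) * hαβ
  have hn_le : n ≤ ⌊(n : ℝ) * (β - 1)⌋₊ :=
    Nat.le_floor (le_mul_of_one_le_right n.cast_nonneg hβ)
  rw [h.ncard_floor_mul_mem_Ioo hαirr hn, hcoef, Int.floor_sub_natCast, Nat.cast_sub hn_le,
    Int.natCast_floor_eq_floor (by positivity)]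
end

section
/- Let α be irrational with 1 < α < 2 and let β satisfy 1/α + 1/β = 1. Set a_n = ⌊nα⌋ and b_n = ⌊nβ⌋ for n ≥ 1, with b_0 = 0. Then for every positive integer n, ⌊(b_{n−1} + 1)/β⌋ − ⌊a_n/β⌋ = ⌊(2 − α)n⌋. -/
/-! With `m = ⌊nα⌋`, the first term is `n - 1` because `β > 1`, and since `m / β = m - m / α`
the second is `m - ⌈m / α⌉ = m - n`. As `nα` is not an integer, the right-hand side is
`⌊2n - nα⌋ = 2n - m - 1`, which is `(n - 1) - (m - n)`. -/

section FloorRing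

variable {K : Type*} [Field K] [LinearOrder K] [IsStrictOrderedRing K] [FloorRing K]

theorem Int.floor_floor_mul_add_one_div {β : K} (hβ : 1 < β) (k : ℤ) :
    ⌊((⌊(k : K) * β⌋ : K) + 1) / β⌋ = k := by
  have hβ0 : 0 < β := zero_lt_one.trans hβ
  rw [Int.floor_eq_iff, le_div_iff₀ hβ0, div_lt_iff₀ hβ0]
  have hlt := Int.lt_floor_add_one ((k : K) * β)
  have hle := Int.floor_le ((k : K) * β)
  constructor <;> linarith

theorem Int.ceil_floor_mul_div {α : K} (hα : 1 ≤ α) (n : ℤ)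
    (h : (n : K) * α ∉ Set.range Int.cast) :
    ⌈(⌊(n : K) * α⌋ : K) / α⌉ = n := by
  have hα0 : 0 < α := zero_lt_one.trans_le hα
  rw [Int.ceil_eq_iff, lt_div_iff₀ hα0, div_le_iff₀ hα0]
  have hlt := Int.lt_floor_add_one ((n : K) * α)
  have hle := (Int.floor_lt_self_iff.mpr h).le
  constructor <;> nlinarith

theorem Int.floor_div_eq_sub_ceil_div_of_inv_add_inv {α β : K} (hsum : 1 / α + 1 / β = 1)
    (m : ℤ) : ⌊(m : K) / β⌋ = m - ⌈(m : K) / α⌉ := by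
  have hdiv : (m : K) / β = -((m : K) / α) + m := by
    rw [div_eq_mul_one_div, div_eq_mul_one_div, eq_sub_of_add_eq' hsum]
    ring
  rw [hdiv, Int.floor_add_intCast, Int.floor_neg]
  ring

theorem Int.floor_intCast_sub_of_notMem_s6 {x : K} (h : x ∉ Set.range Int.cast) (z : ℤ) :
    ⌊(z : K) - x⌋ = z - ⌊x⌋ - 1 := by
  rw [sub_eq_neg_add, Int.floor_add_intCast, Int.floor_neg,
    (Int.ceil_eq_floor_add_one_iff_notMem x).mpr h]
  ring

end FloorRing

theorem floor_quotient_identity_beta_general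
    (α β : ℝ) (hαirr : Irrational α)
    (hα1 : 1 < α) (hsum : 1 / α + 1 / β = 1) :
    ∀ n : ℕ, 0 < n →
      ⌊((⌊((n : ℝ) - 1) * β⌋ : ℝ) + 1) / β⌋ - ⌊(⌊(n : ℝ) * α⌋ : ℝ) / β⌋ =
        ⌊(2 - α) * (n : ℝ)⌋ := by
  intro n hn
  have hβ : 1 < β :=
    (Real.holderConjugate_iff.mpr ⟨hα1, by simpa only [one_div] using hsum⟩).symm.lt
  have hnα : ((n : ℤ) : ℝ) * α ∉ Set.range Int.cast := by
    rintro ⟨m, hm⟩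
    exact (hαirr.natCast_mul hn.ne').ne_int m (by exact_mod_cast hm.symm)
  have hfirst := Int.floor_floor_mul_add_one_div hβ ((n : ℤ) - 1)
  have hsecond := Int.floor_div_eq_sub_ceil_div_of_inv_add_inv hsum ⌊((n : ℤ) : ℝ) * α⌋
  rw [Int.ceil_floor_mul_div hα1.le n hnα] at hsecond
  have hright := Int.floor_intCast_sub_of_notMem_s6 hnα (2 * n)
  push_cast at hfirst hsecond hright
  rw [hfirst, hsecond, show (2 - α) * (n : ℝ) = 2 * n - n * α by ring, hright]
  ring

theorem floor_quotient_identity_beta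
    (α β : ℝ) (hαirr : Irrational α)
    (hα1 : 1 < α) (hα2 : α < 2) (hsum : 1 / α + 1 / β = 1) :
    ∀ n : ℕ, 0 < n →
      ⌊((⌊((n : ℝ) - 1) * β⌋ : ℝ) + 1) / β⌋ - ⌊(⌊(n : ℝ) * α⌋ : ℝ) / β⌋ =
        ⌊(2 - α) * (n : ℝ)⌋ :=
  floor_quotient_identity_beta_general α β hαirr hα1 hsum
end

section
/- Let α be irrational with 1 < α < 2 and let β satisfy 1/α + 1/β = 1. Set a_n = ⌊nα⌋ and b_n = ⌊nβ⌋ for n ≥ 1. Then for every positive integer n, ⌊b_n/α⌋ − ⌊(a_n + 1)/α⌋ = ⌊((2 − α)/(α − 1))·n⌋. -/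
/-!
Write `b = ⌊nβ⌋`. Since `1/α = 1 - 1/β`, we get `⌊b/α⌋ = b - ⌈b/β⌉`, and `⌈⌊nβ⌋/β⌉ = n`
because `β > 1`; dually `⌊(⌊nα⌋ + 1)/α⌋ = n` because `α > 1`. Finally
`(2 - α)/(α - 1) = β - 2`, so the right-hand side is `b - 2n = (b - n) - n`.
-/

namespace BeattyConjugate

variable {α β : ℝ}

theorem one_lt_of_one_div_add_one_div (hα : 1 < α) (hsum : 1 / α + 1 / β = 1) : 1 < β := by
  have hαinv_pos : 0 < 1 / α := by positivity
  have hαinv_lt : 1 / α < 1 := (div_lt_one (by linarith)).mpr hα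
  have hβ0 : 0 < β := one_div_pos.mp (by linarith)
  by_contra! hβ
  linarith [one_le_one_div hβ0 hβ]

theorem eq_div_sub_one_of_one_div_add_one_div (hα : 1 < α) (hsum : 1 / α + 1 / β = 1) :
    β = α / (α - 1) := by
  have hβ : 1 < β := one_lt_of_one_div_add_one_div hα hsum
  field_simp at hsum
  rw [eq_div_iff (by linarith)]
  linarith

theorem floor_floor_mul_add_one_div (hα : 1 < α) (m : ℤ) :
    ⌊((⌊(m : ℝ) * α⌋ : ℝ) + 1) / α⌋ = m := by
  have hα0 : 0 < α := by linarith
  have hlo : (⌊(m : ℝ) * α⌋ : ℝ) ≤ m * α := Int.floor_le _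
  have hhi : (m : ℝ) * α < ⌊(m : ℝ) * α⌋ + 1 := Int.lt_floor_add_one _
  rw [Int.floor_eq_iff, le_div_iff₀ hα0, div_lt_iff₀ hα0]
  constructor <;> nlinarith

theorem ceil_floor_mul_div (hβ : 1 ≤ β) (m : ℤ) : ⌈(⌊(m : ℝ) * β⌋ : ℝ) / β⌉ = m := by
  have hβ0 : 0 < β := by linarith
  have hlo : (⌊(m : ℝ) * β⌋ : ℝ) ≤ m * β := Int.floor_le _
  have hhi : (m : ℝ) * β < ⌊(m : ℝ) * β⌋ + 1 := Int.lt_floor_add_one _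
  rw [Int.ceil_eq_iff, lt_div_iff₀ hβ0, div_le_iff₀ hβ0]
  constructor <;> nlinarith

theorem floor_intCast_div_eq_sub_ceil (hsum : 1 / α + 1 / β = 1) (b : ℤ) :
    ⌊(b : ℝ) / α⌋ = b - ⌈(b : ℝ) / β⌉ := by
  have hsplit : (b : ℝ) / α = b + -((b : ℝ) / β) := by
    rw [div_eq_mul_one_div, show 1 / α = 1 - 1 / β by linarith]
    ring
  rw [hsplit, Int.floor_intCast_add, Int.floor_neg, sub_eq_add_neg]

end BeattyConjugate

open BeattyConjugate in
theorem floor_quotient_identity_alpha_general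
    (α β : ℝ)
    (hα1 : 1 < α) (hsum : 1 / α + 1 / β = 1) :
    ∀ n : ℕ, 0 < n →
      ⌊(⌊(n : ℝ) * β⌋ : ℝ) / α⌋ - ⌊((⌊(n : ℝ) * α⌋ : ℝ) + 1) / α⌋ =
        ⌊((2 - α) / (α - 1)) * (n : ℝ)⌋ := by
  intro n _
  have hβ1 : 1 < β := one_lt_of_one_div_add_one_div hα1 hsum
  have hB := ceil_floor_mul_div hβ1.le n
  have hA := floor_floor_mul_add_one_div hα1 n
  have hC : (2 - α) / (α - 1) * (n : ℝ) = n * β - ((2 * n : ℤ) : ℝ) := by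
    rw [eq_div_sub_one_of_one_div_add_one_div hα1 hsum]
    field_simp [show α - 1 ≠ 0 by linarith]
    push_cast
    ring
  rw [Int.cast_natCast] at hA hB
  rw [floor_intCast_div_eq_sub_ceil hsum, hB, hA, hC, Int.floor_sub_intCast]
  ring

theorem floor_quotient_identity_alpha
    (α β : ℝ) (hαirr : Irrational α)
    (hα1 : 1 < α) (hα2 : α < 2) (hsum : 1 / α + 1 / β = 1) :
    ∀ n : ℕ, 0 < n →
      ⌊(⌊(n : ℝ) * β⌋ : ℝ) / α⌋ - ⌊((⌊(n : ℝ) * α⌋ : ℝ) + 1) / α⌋ =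
        ⌊((2 - α) / (α - 1)) * (n : ℝ)⌋ :=
  floor_quotient_identity_alpha_general α β hα1 hsum
end

section
/- Let k be a positive integer and let α be irrational with 1/(k+1) < α < 1/k. Then for every nonnegative integer m, the number of positive integers n with ⌊nα⌋ = m is either k or k+1; moreover, the set of nonnegative integers m achieving multiplicity k is infinite, and the set of those achieving multiplicity k+1 is infinite. -/
/-! The positive `n` with `⌊n α⌋ = m` are the integers in `[m / α, (m + 1) / α)` (with `0` removed
when `m = 0`), an interval of length `1 / α ∈ (k, k + 1)`; so there are `k` or `k + 1` of them.
For `m ≥ 1` the multiplicity is the increment of `m ↦ ⌈m / α⌉₊`, which stays within a bounded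
distance of `m / α`; increments eventually all `≤ k` or all `≥ k + 1` would make it grow with
slope `k` or `k + 1` instead of `1 / α`. -/

open Filter

theorem frequently_lt_succ_sub_of_mul_sub_le {a : ℕ → ℝ} {β d C : ℝ} (hd : d < β)
    (ha : ∀ m : ℕ, m * β - C ≤ a m) : ∃ᶠ m in atTop, d < a (m + 1) - a m := by
  intro h
  obtain ⟨B, hB⟩ := eventually_atTop.1 h
  have growth : ∀ j : ℕ, a (B + j) ≤ a B + j * d := by
    intro j
    induction j with
    | zero => simp
    | succ j ih =>
      have := not_lt.1 (hB (B + j) (by omega))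
      rw [← add_assoc]
      push_cast
      linarith
  obtain ⟨j, hj⟩ := exists_nat_gt ((a B - B * β + C) / (β - d))
  rw [div_lt_iff₀ (sub_pos.2 hd)] at hj
  have := ha (B + j)
  push_cast at this
  linarith [growth j]

theorem frequently_succ_sub_lt_of_le_mul_add {a : ℕ → ℝ} {β e C : ℝ} (he : β < e)
    (ha : ∀ m : ℕ, a m ≤ m * β + C) : ∃ᶠ m in atTop, a (m + 1) - a m < e :=
  (frequently_lt_succ_sub_of_mul_sub_le (a := (- a ·)) (neg_lt_neg he) (C := C)
    fun m ↦ by linarith [ha m]).mono fun m h ↦ by linarith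

noncomputable def beattyMult (α : ℝ) (m : ℕ) : ℕ := {n : ℕ | 0 < n ∧ ⌊(n : ℝ) * α⌋ = m}.ncard

section
variable {α : ℝ}

theorem beattyMult_eq (hα : 0 < α) (m : ℕ) :
    beattyMult α m = ⌈(m + 1) / α⌉₊ - max 1 ⌈m / α⌉₊ := by
  have : {n : ℕ | 0 < n ∧ ⌊(n : ℝ) * α⌋ = m} = Set.Ico (max 1 ⌈m / α⌉₊) ⌈(m + 1) / α⌉₊ := by
    ext n
    simp only [Set.mem_ofPred_eq, Set.mem_Ico, max_le_iff, Nat.one_le_iff_ne_zero, Nat.ceil_le,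
      Nat.lt_ceil, div_le_iff₀ hα, lt_div_iff₀ hα, Int.floor_eq_iff, Int.cast_natCast, and_assoc,
      Nat.pos_iff_ne_zero]
  rw [beattyMult, this, ← Finset.coe_Ico, Set.ncard_coe_finset, Nat.card_Ico]

theorem beattyMult_eq_of_ne_zero (hα : 0 < α) {m : ℕ} (hm : m ≠ 0) :
    (beattyMult α m : ℝ) = ⌈(m + 1 : ℕ) / α⌉₊ - ⌈m / α⌉₊ := by
  have hpos : 1 ≤ ⌈m / α⌉₊ := Nat.one_le_iff_ne_zero.2 (by positivity)
  rw [beattyMult_eq hα, max_eq_right hpos, Nat.cast_sub (Nat.ceil_mono (by gcongr; simp))]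
  push_cast
  rfl

theorem beattyMult_eq_or {k : ℕ} (hα : 0 < α) (hk : k < 1 / α) (hk' : 1 / α ≤ k + 1) (m : ℕ) :
    beattyMult α m = k ∨ beattyMult α m = k + 1 := by
  rcases eq_or_ne m 0 with rfl | hm
  · have : ⌈1 / α⌉₊ = k + 1 :=
      (Nat.ceil_eq_iff k.succ_ne_zero).2 ⟨hk, by exact_mod_cast hk'⟩
    rw [beattyMult_eq hα, Nat.cast_zero, zero_add, zero_div, Nat.ceil_zero, this]
    omega
  · have hy : 0 ≤ (m : ℝ) / α := by positivity
    have hstep : ⌈(m + 1 : ℝ) / α⌉₊ = ⌈m / α + 1 / α⌉₊ := by rw [add_div]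
    have lower : ⌈m / α⌉₊ + k ≤ ⌈m / α + 1 / α⌉₊ :=
      Nat.ceil_add_natCast hy k ▸ Nat.ceil_mono (by linarith)
    have upper : ⌈m / α + 1 / α⌉₊ ≤ ⌈m / α⌉₊ + (k + 1) :=
      Nat.ceil_add_natCast hy (k + 1) ▸ Nat.ceil_mono (by push_cast; linarith)
    have hpos : 1 ≤ ⌈m / α⌉₊ := Nat.one_le_iff_ne_zero.2 (by positivity)
    rw [beattyMult_eq hα, max_eq_right hpos, hstep]
    omega

theorem frequently_beattyMult_lt (hα : 0 < α) {e : ℝ} (he : 1 / α < e) :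
    ∃ᶠ m in atTop, (beattyMult α m : ℝ) < e := by
  have := frequently_succ_sub_lt_of_le_mul_add (a := fun m ↦ (⌈m / α⌉₊ : ℝ)) (C := 1) he
    fun m ↦ by rw [mul_one_div]; exact (Nat.ceil_lt_add_one (by positivity)).le
  refine (this.and_eventually (eventually_ne_atTop 0)).mono fun m ⟨h, hm⟩ ↦ ?_
  rwa [beattyMult_eq_of_ne_zero hα hm]

theorem frequently_lt_beattyMult (hα : 0 < α) {d : ℝ} (hd : d < 1 / α) :
    ∃ᶠ m in atTop, d < beattyMult α m := by
  have := frequently_lt_succ_sub_of_mul_sub_le (a := fun m ↦ (⌈m / α⌉₊ : ℝ)) (C := 0) hd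
    fun m ↦ by rw [mul_one_div, sub_zero]; exact Nat.le_ceil _
  refine (this.and_eventually (eventually_ne_atTop 0)).mono fun m ⟨h, hm⟩ ↦ ?_
  rwa [beattyMult_eq_of_ne_zero hα hm]

end

theorem beatty_multiplicity_k_or_succ_general
    (k : ℕ) (hk : 0 < k) (α : ℝ)
    (hα1 : 1 / ((k : ℝ) + 1) < α) (hα2 : α < 1 / (k : ℝ)) :
    (∀ m : ℕ,
      {n : ℕ | 0 < n ∧ ⌊(n : ℝ) * α⌋ = (m : ℤ)}.ncard = k ∨
      {n : ℕ | 0 < n ∧ ⌊(n : ℝ) * α⌋ = (m : ℤ)}.ncard = k + 1) ∧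
    {m : ℕ | {n : ℕ | 0 < n ∧ ⌊(n : ℝ) * α⌋ = (m : ℤ)}.ncard = k}.Infinite ∧
    {m : ℕ | {n : ℕ | 0 < n ∧ ⌊(n : ℝ) * α⌋ = (m : ℤ)}.ncard = k + 1}.Infinite := by
  have hα : 0 < α := lt_trans (by positivity) hα1
  have hk_lt_inv : (k : ℝ) < 1 / α := (lt_one_div hα (by positivity)).1 hα2
  have hinv_lt_k : 1 / α < k + 1 := (one_div_lt hα (by positivity)).2 hα1
  have hmult := beattyMult_eq_or hα hk_lt_inv hinv_lt_k.le
  change (∀ m, beattyMult α m = k ∨ beattyMult α m = k + 1) ∧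
    {m | beattyMult α m = k}.Infinite ∧ {m | beattyMult α m = k + 1}.Infinite
  refine ⟨hmult, Nat.frequently_atTop_iff_infinite.1 ?_, Nat.frequently_atTop_iff_infinite.1 ?_⟩
  · exact (frequently_beattyMult_lt hα hinv_lt_k).mono fun m h ↦
      (hmult m).resolve_right fun hm ↦ by simp [hm] at h
  · exact (frequently_lt_beattyMult hα hk_lt_inv).mono fun m h ↦
      (hmult m).resolve_left fun hm ↦ by simp [hm] at h

theorem beatty_multiplicity_k_or_succ
    (k : ℕ) (hk : 0 < k) (α : ℝ) (hαirr : Irrational α)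
    (hα1 : 1 / ((k : ℝ) + 1) < α) (hα2 : α < 1 / (k : ℝ)) :
    (∀ m : ℕ,
      {n : ℕ | 0 < n ∧ ⌊(n : ℝ) * α⌋ = (m : ℤ)}.ncard = k ∨
      {n : ℕ | 0 < n ∧ ⌊(n : ℝ) * α⌋ = (m : ℤ)}.ncard = k + 1) ∧
    {m : ℕ | {n : ℕ | 0 < n ∧ ⌊(n : ℝ) * α⌋ = (m : ℤ)}.ncard = k}.Infinite ∧
    {m : ℕ | {n : ℕ | 0 < n ∧ ⌊(n : ℝ) * α⌋ = (m : ℤ)}.ncard = k + 1}.Infinite :=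
  beatty_multiplicity_k_or_succ_general k hk α hα1 hα2
end

section
/- Let k be a positive integer and let α be irrational with 1/(k+1) < α < 1/k, and set β = α/(1 − α). Then for every positive integer t, the number of positive integers n with ⌊nα⌋ = t equals k+1 if and only if the number of positive integers n with ⌊nβ⌋ = t equals k. -/
/-!
Write `β = α / (1 - α)` with `0 < α < 1`. Clearing the denominator, `⌊m β⌋ = t` says exactly that
`t ≤ (m + t) α` and `(m + t + 1) α < t + 1`, i.e. that both `m + t` and `m + t + 1` lie in the
`α`-fibre of `t`. That fibre is a nonempty finite interval of integers, so all of its elements but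
the largest have their successor in it: the `α`-fibre of `t` has one element more than the
`β`-fibre.
-/

def beattyFiber (γ : ℝ) (t : ℤ) : Set ℕ := {n | 0 < n ∧ ⌊(n : ℝ) * γ⌋ = t}

theorem Set.OrdConnected.ncard_sep_add_one_mem_add_one {S : Set ℕ} (hS : S.OrdConnected)
    (hfin : S.Finite) (hne : S.Nonempty) : {n ∈ S | n + 1 ∈ S}.ncard + 1 = S.ncard := by
  have hmax : sSup S ∈ S := Nat.sSup_mem hne hfin.bddAbove
  suffices {n ∈ S | n + 1 ∈ S} = S \ {sSup S} by
    rw [this, Set.ncard_sdiff_singleton_add_one hmax hfin]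
  ext n
  simp only [Set.mem_sep_iff, Set.mem_sdiff, Set.mem_singleton_iff]
  refine ⟨fun ⟨hn, hsucc⟩ => ⟨hn, ?_⟩, fun ⟨hn, hne⟩ => ⟨hn, ?_⟩⟩
  · rintro rfl
    exact (Nat.lt_succ_self _).not_ge (le_csSup hfin.bddAbove hsucc)
  · have hlt : n < sSup S := (le_csSup hfin.bddAbove hn).lt_of_ne hne
    exact hS.out hn hmax ⟨n.le_succ, hlt⟩

section

variable {γ : ℝ}

theorem beattyFiber_ordConnected (hγ : 0 ≤ γ) (t : ℤ) : (beattyFiber γ t).OrdConnected := by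
  refine ⟨fun a ⟨ha, hfa⟩ b ⟨_, hfb⟩ n ⟨han, hnb⟩ => ⟨ha.trans_le han, le_antisymm ?_ ?_⟩⟩
  · exact hfb ▸ Int.floor_mono (mul_le_mul_of_nonneg_right (by exact_mod_cast hnb) hγ)
  · exact hfa ▸ Int.floor_mono (mul_le_mul_of_nonneg_right (by exact_mod_cast han) hγ)

theorem beattyFiber_finite (hγ : 0 < γ) (t : ℤ) : (beattyFiber γ t).Finite := by
  refine (Set.finite_Iio ⌈(t + 1) / γ⌉₊).subset fun n ⟨_, hn⟩ => ?_
  have : (n : ℝ) * γ < t + 1 := by simpa [hn] using Int.lt_floor_add_one ((n : ℝ) * γ)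
  exact Nat.lt_ceil.2 ((lt_div_iff₀ hγ).2 this)

theorem beattyFiber_nonempty (hγ0 : 0 < γ) (hγ1 : γ < 1) (t : ℕ) :
    (beattyFiber γ t).Nonempty := by
  refine ⟨⌊t / γ⌋₊ + 1, Nat.succ_pos _, Int.floor_eq_iff.2 ⟨?_, ?_⟩⟩
  · have := Nat.lt_floor_add_one ((t : ℝ) / γ)
    push_cast
    exact ((div_le_iff₀ hγ0).1 this.le)
  · have := Nat.floor_le (div_nonneg (Nat.cast_nonneg t) hγ0.le)
    push_cast
    nlinarith [(le_div_iff₀ hγ0).1 this]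

end

section

variable {α : ℝ}

theorem floor_mul_div_one_sub_eq_iff (hα0 : 0 ≤ α) (hα1 : α < 1) (x : ℝ) (t : ℤ) :
    ⌊x * (α / (1 - α))⌋ = t ↔ ⌊(x + t) * α⌋ = t ∧ ⌊(x + t + 1) * α⌋ = t := by
  have h1α : 0 < 1 - α := by linarith
  simp only [Int.floor_eq_iff, mul_div_assoc', le_div_iff₀ h1α, div_lt_iff₀ h1α]
  constructor
  · rintro ⟨h, h'⟩
    refine ⟨⟨?_, ?_⟩, ?_, ?_⟩ <;> nlinarith
  · rintro ⟨⟨h, -⟩, -, h'⟩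
    constructor <;> nlinarith

theorem beattyFiber_div_one_sub_eq_preimage (hα0 : 0 ≤ α) (hα1 : α < 1) (t : ℕ) :
    beattyFiber (α / (1 - α)) t =
      (· + t) ⁻¹' {n ∈ beattyFiber α t | n + 1 ∈ beattyFiber α t} := by
  ext m
  simp only [beattyFiber, Set.mem_preimage, Set.mem_ofPred_eq,
    floor_mul_div_one_sub_eq_iff hα0 hα1]
  push_cast
  refine ⟨fun ⟨hm, hl, hr⟩ => ⟨⟨by omega, hl⟩, by omega, hr⟩,
    fun ⟨⟨hpos, hl⟩, _, hr⟩ => ⟨Nat.pos_of_ne_zero ?_, hl, hr⟩⟩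
  -- `m = 0` would force `t ≤ t α`, which fails for `t > 0`
  rintro rfl
  have ht := (Int.floor_eq_iff.1 hl).1
  push_cast at ht
  have : (t : ℝ) ≤ 0 := by nlinarith
  have : t ≤ 0 := by exact_mod_cast this
  omega

theorem ncard_beattyFiber_eq_ncard_beattyFiber_div_one_sub_add_one (hα0 : 0 < α) (hα1 : α < 1)
    (t : ℕ) : (beattyFiber α t).ncard = (beattyFiber (α / (1 - α)) t).ncard + 1 := by
  have hrange : {n ∈ beattyFiber α t | n + 1 ∈ beattyFiber α t} ⊆ Set.range (· + t) := by
    rintro n ⟨⟨hn, hfl⟩, -⟩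
    have hle : (t : ℝ) ≤ n := by
      have := (Int.floor_eq_iff.1 hfl).1
      push_cast at this
      nlinarith
    exact ⟨n - t, Nat.sub_add_cancel (by exact_mod_cast hle)⟩
  rw [beattyFiber_div_one_sub_eq_preimage hα0.le hα1,
    Set.ncard_preimage_of_injective_subset_range (add_left_injective t) hrange,
    (beattyFiber_ordConnected hα0.le t).ncard_sep_add_one_mem_add_one
      (beattyFiber_finite hα0 t) (beattyFiber_nonempty hα0 hα1 t)]

end

theorem beatty_multiplicity_transfer_general
    (k : ℕ) (α : ℝ)
    (hα1 : 1 / ((k : ℝ) + 1) < α) (hα2 : α < 1 / (k : ℝ))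
    (β : ℝ) (hβ : β = α / (1 - α)) :
    ∀ t : ℕ, 0 < t →
      ({n : ℕ | 0 < n ∧ ⌊(n : ℝ) * α⌋ = (t : ℤ)}.ncard = k + 1 ↔
       {n : ℕ | 0 < n ∧ ⌊(n : ℝ) * β⌋ = (t : ℤ)}.ncard = k) := by
  intro t _
  have hα0 : 0 < α := lt_trans (by positivity) hα1
  have hα1' : α < 1 := hα2.trans_le (by simpa using Nat.cast_inv_le_one (α := ℝ) k)
  have hcard := ncard_beattyFiber_eq_ncard_beattyFiber_div_one_sub_add_one hα0 hα1' t
  rw [← hβ] at hcard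
  change (beattyFiber α t).ncard = k + 1 ↔ (beattyFiber β t).ncard = k
  omega

theorem beatty_multiplicity_transfer
    (k : ℕ) (hk : 0 < k) (α : ℝ) (hαirr : Irrational α)
    (hα1 : 1 / ((k : ℝ) + 1) < α) (hα2 : α < 1 / (k : ℝ))
    (β : ℝ) (hβ : β = α / (1 - α)) :
    ∀ t : ℕ, 0 < t →
      ({n : ℕ | 0 < n ∧ ⌊(n : ℝ) * α⌋ = (t : ℤ)}.ncard = k + 1 ↔
       {n : ℕ | 0 < n ∧ ⌊(n : ℝ) * β⌋ = (t : ℤ)}.ncard = k) :=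
  beatty_multiplicity_transfer_general k α hα1 hα2 β hβ
end

section
/- Let k be a positive integer and let α be irrational with 1/(k+1) < α < 1/k. Then there exist irrational numbers β, β′ > 1 with 1/β + 1/β′ = 1 such that the set of positive integers m whose multiplicity in the Beatty sequence with slope α equals k+1 is exactly {⌊nβ⌋ : n ≥ 1}, and the set of positive integers m whose multiplicity equals k is exactly {⌊nβ′⌋ : n ≥ 1}. -/
/-!
Put `θ = 1/α - k ∈ (0, 1)`. The integers `n ≥ 1` with `⌊nα⌋ = m` are those in `[m/α, (m+1)/α)`,
so for `m ≥ 1` the multiplicity of `m` is `⌈(m+1)/α⌉ - ⌈m/α⌉ = k + d`, where `d = ⌈(m+1)θ⌉ - ⌈mθ⌉`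
is the multiplicity of `m` in the Beatty sequence of `β = 1/θ > 1`, hence is `0` or `1`. So `m` has
multiplicity `k + 1` exactly when it is a term of the Beatty sequence of `β`, and by Rayleigh's theorem
it has multiplicity `k` exactly when it is a term of the complementary sequence, of slope `1/(1-θ)`.
-/

noncomputable def beattyMultiplicity (r : ℝ) (m : ℤ) : ℕ :=
  {n : ℕ | 0 < n ∧ ⌊(n : ℝ) * r⌋ = m}.ncard

section

variable {r : ℝ} {m : ℤ}

lemma pos_of_mem_beattySeq_pos (hr : 1 ≤ r) (hm : m ∈ {beattySeq r k | k > 0}) : 0 < m := by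
  obtain ⟨k, hk, rfl⟩ := hm
  exact Int.floor_pos.2 <| one_le_mul_of_one_le_of_one_le (by exact_mod_cast hk) hr

lemma setOf_exists_nat_eq_floor_mul (r : ℝ) :
    {m : ℤ | ∃ n : ℕ, 0 < n ∧ m = ⌊(n : ℝ) * r⌋} = {beattySeq r k | k > 0} := by
  ext m
  constructor
  · rintro ⟨n, hn, rfl⟩
    exact ⟨n, by exact_mod_cast hn, by simp [beattySeq]⟩
  · rintro ⟨k, hk, rfl⟩
    lift k to ℕ using hk.le
    exact ⟨k, by exact_mod_cast hk, by simp [beattySeq]⟩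

lemma setOf_floor_mul_eq_Ico (hr : 0 < r) (hm : 0 < m) :
    {n : ℕ | 0 < n ∧ ⌊(n : ℝ) * r⌋ = m} = Finset.Ico ⌈m / r⌉₊ ⌈(m + 1) / r⌉₊ := by
  have hm' : (0 : ℝ) < m := by exact_mod_cast hm
  ext n
  simp only [Set.mem_ofPred_eq, Finset.coe_Ico, Set.mem_Ico, Nat.ceil_le, Nat.lt_ceil,
    Int.floor_eq_iff, div_le_iff₀ hr, lt_div_iff₀ hr]
  exact ⟨And.right, fun h ↦ ⟨Nat.cast_pos.1 (pos_of_mul_pos_left (hm'.trans_le h.1) hr.le), h⟩⟩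

lemma beattyMultiplicity_eq_ceil_sub_ceil (hr : 0 < r) (hm : 0 < m) :
    (beattyMultiplicity r m : ℤ) = ⌈(m + 1) / r⌉ - ⌈m / r⌉ := by
  have hm' : (0 : ℝ) ≤ m := by exact_mod_cast hm.le
  have hle : ⌈m / r⌉₊ ≤ ⌈(m + 1) / r⌉₊ := Nat.ceil_mono (by gcongr; linarith)
  rw [beattyMultiplicity, setOf_floor_mul_eq_Ico hr hm, Set.ncard_coe_finset, Nat.card_Ico,
    Nat.cast_sub hle, Int.natCast_ceil_eq_ceil (by positivity),
    Int.natCast_ceil_eq_ceil (by positivity)]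

lemma beattyMultiplicity_le_one (hr : 1 ≤ r) (hm : 0 < m) : beattyMultiplicity r m ≤ 1 := by
  have h := beattyMultiplicity_eq_ceil_sub_ceil (zero_lt_one.trans_le hr) hm
  have hstep : ⌈(m + 1) / r⌉ ≤ ⌈m / r⌉ + 1 := by
    rw [← Int.ceil_add_one]
    refine Int.ceil_mono ?_
    rw [add_div]
    gcongr
    exact div_le_one_of_le₀ hr (by linarith)
  omega

lemma mem_beattySeq_pos_iff_beattyMultiplicity_ne_zero (hr : 0 < r) (hm : 0 < m) :
    m ∈ {beattySeq r k | k > 0} ↔ beattyMultiplicity r m ≠ 0 := by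
  have hfin : {n : ℕ | 0 < n ∧ ⌊(n : ℝ) * r⌋ = m}.Finite := by
    rw [setOf_floor_mul_eq_Ico hr hm]
    exact Finset.finite_toSet _
  rw [← setOf_exists_nat_eq_floor_mul, beattyMultiplicity, ← Nat.pos_iff_ne_zero,
    Set.ncard_pos hfin]
  simp only [Set.mem_ofPred_eq, Set.Nonempty, eq_comm]

lemma beattyMultiplicity_eq_add {α β : ℝ} {k : ℕ} (hα : 0 < α) (hβ : 0 < β)
    (hαβ : α⁻¹ = k + β⁻¹) (hm : 0 < m) :
    beattyMultiplicity α m = k + beattyMultiplicity β m := by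
  have hceil (x : ℤ) : ⌈(x : ℝ) / α⌉ = ⌈(x : ℝ) / β⌉ + x * k := by
    rw [div_eq_mul_inv, hαβ, ← Int.ceil_add_intCast]
    push_cast
    ring_nf
  zify
  rw [beattyMultiplicity_eq_ceil_sub_ceil hα hm, beattyMultiplicity_eq_ceil_sub_ceil hβ hm,
    hceil m, ← Int.cast_one, ← Int.cast_add, hceil (m + 1)]
  ring

lemma beattyMultiplicity_eq_add_one_iff {α β : ℝ} {k : ℕ} (hα : 0 < α) (hβ : 1 ≤ β)
    (hαβ : α⁻¹ = k + β⁻¹) (hm : 0 < m) :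
    beattyMultiplicity α m = k + 1 ↔ m ∈ {beattySeq β j | j > 0} := by
  have hβ₀ : 0 < β := zero_lt_one.trans_le hβ
  have := beattyMultiplicity_le_one hβ hm
  rw [beattyMultiplicity_eq_add hα hβ₀ hαβ hm, mem_beattySeq_pos_iff_beattyMultiplicity_ne_zero hβ₀ hm]
  omega

lemma beattyMultiplicity_eq_iff {α β : ℝ} {k : ℕ} (hα : 0 < α) (hβ : 0 < β)
    (hαβ : α⁻¹ = k + β⁻¹) (hm : 0 < m) :
    beattyMultiplicity α m = k ↔ m ∉ {beattySeq β j | j > 0} := by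
  rw [beattyMultiplicity_eq_add hα hβ hαβ hm, mem_beattySeq_pos_iff_beattyMultiplicity_ne_zero hβ hm]
  omega

end

theorem Real.HolderConjugate.mem_beattySeq_pos_iff {r s : ℝ} (hrs : r.HolderConjugate s)
    (hr : Irrational r) (m : ℤ) :
    m ∈ {beattySeq s k | k > 0} ↔ 0 < m ∧ m ∉ {beattySeq r k | k > 0} := by
  have h := Set.ext_iff.1 (hr.beattySeq_symmDiff_beattySeq_pos hrs) m
  have hpos : m ∈ {beattySeq r k | k > 0} → 0 < m := pos_of_mem_beattySeq_pos hrs.lt.le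
  rw [Set.mem_symmDiff] at h
  change _ ↔ 0 < m at h
  tauto

theorem beatty_multiplicity_partition_general
    (k : ℕ) (α : ℝ) (hαirr : Irrational α)
    (hα1 : 1 / ((k : ℝ) + 1) < α) (hα2 : α < 1 / (k : ℝ)) :
    ∃ β β' : ℝ, Irrational β ∧ Irrational β' ∧ 1 < β ∧ 1 < β' ∧
      1 / β + 1 / β' = 1 ∧
      {m : ℤ | 0 < m ∧
          {n : ℕ | 0 < n ∧ ⌊(n : ℝ) * α⌋ = m}.ncard = k + 1} =
        {m : ℤ | ∃ n : ℕ, 0 < n ∧ m = ⌊(n : ℝ) * β⌋} ∧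
      {m : ℤ | 0 < m ∧
          {n : ℕ | 0 < n ∧ ⌊(n : ℝ) * α⌋ = m}.ncard = k} =
        {m : ℤ | ∃ n : ℕ, 0 < n ∧ m = ⌊(n : ℝ) * β'⌋} := by
  have hα : 0 < α := (by positivity : (0 : ℝ) < 1 / (k + 1)).trans hα1
  have hk : (0 : ℝ) < k := one_div_pos.1 (hα.trans hα2)
  set θ := α⁻¹ - k
  have hθ₀ : 0 < θ := by rwa [sub_pos, ← one_div, lt_one_div hk hα]
  have hθ₁ : θ < 1 := by rwa [sub_lt_iff_lt_add', ← one_div, one_div_lt hα (by positivity)]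
  have hθ : Irrational θ := hαirr.inv.sub_natCast k
  have hθ' : Irrational (1 - θ) := by simpa using hθ.natCast_sub 1
  have hαθ : α⁻¹ = k + θ⁻¹⁻¹ := by rw [inv_inv]; ring
  have hrs : θ⁻¹.HolderConjugate (1 - θ)⁻¹ :=
    .inv_inv hθ₀ (sub_pos.2 hθ₁) (add_sub_cancel θ 1)
  refine ⟨θ⁻¹, (1 - θ)⁻¹, hθ.inv, hθ'.inv, hrs.lt, hrs.symm.lt,
    by simpa only [one_div] using hrs.inv_add_inv_eq_one, ?_, ?_⟩
  all_goals rw [setOf_exists_nat_eq_floor_mul]; ext m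
  · rw [← and_iff_right_of_imp (pos_of_mem_beattySeq_pos hrs.lt.le)]
    exact and_congr_right fun hm ↦ beattyMultiplicity_eq_add_one_iff hα hrs.lt.le hαθ hm
  · rw [hrs.mem_beattySeq_pos_iff hθ.inv]
    exact and_congr_right fun hm ↦ beattyMultiplicity_eq_iff hα hrs.pos hαθ hm

theorem beatty_multiplicity_partition
    (k : ℕ) (hk : 0 < k) (α : ℝ) (hαirr : Irrational α)
    (hα1 : 1 / ((k : ℝ) + 1) < α) (hα2 : α < 1 / (k : ℝ)) :
    ∃ β β' : ℝ, Irrational β ∧ Irrational β' ∧ 1 < β ∧ 1 < β' ∧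
      1 / β + 1 / β' = 1 ∧
      {m : ℤ | 0 < m ∧
          {n : ℕ | 0 < n ∧ ⌊(n : ℝ) * α⌋ = m}.ncard = k + 1} =
        {m : ℤ | ∃ n : ℕ, 0 < n ∧ m = ⌊(n : ℝ) * β⌋} ∧
      {m : ℤ | 0 < m ∧
          {n : ℕ | 0 < n ∧ ⌊(n : ℝ) * α⌋ = m}.ncard = k} =
        {m : ℤ | ∃ n : ℕ, 0 < n ∧ m = ⌊(n : ℝ) * β'⌋} :=
  beatty_multiplicity_partition_general k α hαirr hα1 hα2
end

section
/- Let α be irrational with 1 < α < 2 and let β satisfy 1/α + 1/β = 1. Set a_n = ⌊nα⌋ and b_n = ⌊nβ⌋ for n ≥ 1, b_0 = 0, B = {⌊mβ⌋ : m ≥ 1}, and define r_n as the number of integers m ∈ B with a_n < m ≤ b_{n−1}. Then there exists a real number r with 0 < r < 1 such that r_n = ⌊rn⌋ for all n ≥ 1. -/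
/-! Since `k ↦ ⌊kβ⌋` is strictly increasing, `r_n` counts the indices `k ≤ n - 1` with
`⌊kβ⌋ > a_n`. Below `a_n` lie the `n` terms `a_1, …, a_n` of `A` and hence, by complementarity,
exactly `a_n - n` terms of `B`; concretely `⌊(a_n - n)β⌋ ≤ a_n < ⌊(a_n - n + 1)β⌋`, which follows
from `(α - 1)β = α`. So `r_n = 2n - 1 - a_n`, and this is `⌊(2 - α)n⌋` because `nα` is not an
integer. -/

section FloorMul

variable {K : Type*} [Field K] [LinearOrder K] [IsStrictOrderedRing K] [FloorRing K] {β : K}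

theorem strictMono_floor_natCast_mul_s14 (hβ : 1 ≤ β) : StrictMono fun k : ℕ ↦ ⌊(k : K) * β⌋ := by
  refine strictMono_nat_of_lt_succ fun k ↦ ?_
  calc ⌊(k : K) * β⌋ < ⌊(k : K) * β + 1⌋ := by rw [Int.floor_add_one]; exact lt_add_one _
    _ ≤ ⌊((k + 1 : ℕ) : K) * β⌋ := Int.floor_mono (by push_cast; linarith)

theorem ncard_floor_mul_mem_Ioc (hβ : 1 ≤ β) {c : ℤ} {p : ℕ} (hpc : ⌊(p : K) * β⌋ ≤ c)
    (hcp : c < ⌊((p : K) + 1) * β⌋) (N : ℕ) :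
    {m : ℤ | (∃ k : ℕ, 0 < k ∧ m = ⌊(k : K) * β⌋) ∧ c < m ∧ m ≤ ⌊(N : K) * β⌋}.ncard = N - p := by
  set f : ℕ → ℤ := fun k ↦ ⌊(k : K) * β⌋
  have hf : StrictMono f := strictMono_floor_natCast_mul_s14 hβ
  have hc : ∀ k, c < f k ↔ p < k := fun k ↦ by
    constructor
    · intro hk
      by_contra! hkp
      exact (hf.monotone hkp).not_gt (hpc.trans_lt hk)
    · intro hpk
      exact hcp.trans_le (by simpa [f] using hf.monotone (Nat.succ_le_of_lt hpk))
  have hset : {m : ℤ | (∃ k : ℕ, 0 < k ∧ m = f k) ∧ c < m ∧ m ≤ f N} =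
      ((Finset.Ioc p N).image f : Set ℤ) := by
    ext m
    simp only [Set.mem_ofPred_eq, Finset.coe_image, Finset.coe_Ioc, Set.mem_image, Set.mem_Ioc]
    constructor
    · rintro ⟨⟨k, -, rfl⟩, hck, hkN⟩
      exact ⟨k, ⟨(hc k).1 hck, hf.le_iff_le.1 hkN⟩, rfl⟩
    · rintro ⟨k, ⟨hpk, hkN⟩, rfl⟩
      exact ⟨⟨k, by omega, rfl⟩, (hc k).2 hpk, hf.monotone hkN⟩
  rw [hset, Set.ncard_coe_finset, Finset.card_image_of_injective _ hf.injective, Nat.card_Ioc]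

end FloorMul

namespace Real.HolderConjugate

variable {α β : ℝ} (h : α.HolderConjugate β) (t : ℝ)
include h

theorem floor_floor_sub_mul_le : ⌊(⌊t * α⌋ - t) * β⌋ ≤ ⌊t * α⌋ := by
  have hα := h.sub_one_pos
  have := Int.floor_le (t * α)
  rw [Int.floor_le_iff]
  refine lt_of_mul_lt_mul_left ?_ hα.le
  calc (α - 1) * ((⌊t * α⌋ - t) * β) = (⌊t * α⌋ - t) * α := by
        linear_combination (⌊t * α⌋ - t) * h.sub_one_mul_conj
    _ < (α - 1) * (⌊t * α⌋ + 1) := by linarith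

theorem floor_lt_floor_floor_sub_add_one_mul : ⌊t * α⌋ < ⌊(⌊t * α⌋ - t + 1) * β⌋ := by
  have hα := h.sub_one_pos
  have := Int.lt_floor_add_one (t * α)
  rw [← Int.add_one_le_iff, Int.le_floor, Int.cast_add, Int.cast_one]
  refine le_of_mul_le_mul_left ?_ hα
  calc (α - 1) * (⌊t * α⌋ + 1) ≤ (⌊t * α⌋ - t + 1) * α := by linarith
    _ = (α - 1) * ((⌊t * α⌋ - t + 1) * β) := by
        linear_combination -(⌊t * α⌋ - t + 1) * h.sub_one_mul_conj

end Real.HolderConjugate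

theorem r_is_beatty
    (α β : ℝ) (hαirr : Irrational α)
    (hα1 : 1 < α) (hα2 : α < 2) (hsum : 1 / α + 1 / β = 1)
    (a b : ℕ → ℤ)
    (ha : ∀ n : ℕ, a n = ⌊(n : ℝ) * α⌋)
    (hb : ∀ n : ℕ, b n = ⌊(n : ℝ) * β⌋)
    (r : ℕ → ℕ)
    (hr : ∀ n : ℕ, r n =
      {m : ℤ | (∃ k : ℕ, 0 < k ∧ m = ⌊(k : ℝ) * β⌋) ∧
        a n < m ∧ m ≤ b (n - 1)}.ncard) :
    ∃ s : ℝ, 0 < s ∧ s < 1 ∧ ∀ n : ℕ, 0 < n → (r n : ℤ) = ⌊s * (n : ℝ)⌋ := by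
  have hαβ : α.HolderConjugate β :=
    Real.holderConjugate_iff.2 ⟨hα1, by simpa only [one_div] using hsum⟩
  refine ⟨2 - α, by linarith, by linarith, fun n hn ↦ ?_⟩
  have hn' : (0 : ℝ) < n := by exact_mod_cast hn
  have hn_le : (n : ℤ) ≤ ⌊(n : ℝ) * α⌋ := Int.le_floor.2 (by push_cast; nlinarith)
  have hlt_two : ⌊(n : ℝ) * α⌋ < 2 * n := Int.floor_lt.2 (by push_cast; nlinarith)
  obtain ⟨p, hp⟩ : ∃ p : ℕ, (p : ℤ) = ⌊(n : ℝ) * α⌋ - n := ⟨_, Int.toNat_of_nonneg (by omega)⟩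
  have hpR : (p : ℝ) = ⌊(n : ℝ) * α⌋ - n := by exact_mod_cast hp
  have hcount : r n = n - 1 - p := by
    rw [hr n, ha n, hb (n - 1)]
    apply ncard_floor_mul_mem_Ioc hαβ.symm.lt.le <;> rw [hpR]
    · exact hαβ.floor_floor_sub_mul_le n
    · exact hαβ.floor_lt_floor_floor_sub_add_one_mul n
  have hfloor : ⌊(2 - α) * n⌋ = 2 * n - ⌊(n : ℝ) * α⌋ - 1 := by
    rw [sub_mul, mul_comm α, ← (hαirr.natCast_mul hn.ne').floor_intCast_sub]
    push_cast
    rfl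
  rw [hcount, hfloor]
  omega
end

section
/- Let k be a positive integer and let α be irrational with (2k − 1)/k < α < (2k + 1)/(k + 1). Set c = (2 − α)/(α − 1) and δ = (2 − α)/(kα − 2k + 1). Then for every positive integer m, the number of positive integers n with ⌊cn⌋ = m equals k if m ∈ {⌊nδ⌋ : n ≥ 1}, and equals k − 1 otherwise. -/
/-! For `γ > 0` and `m ≥ 1`, `⌊nγ⌋ = m` exactly when `n ∈ [m/γ, (m+1)/γ)`, so the multiplicity
of `m` is `⌈(m+1)/γ⌉ - ⌈m/γ⌉`. Since `1/c = (k - 1) + 1/δ` and `(k - 1)m` is an integer, the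
multiplicities for `c` and `δ` differ by exactly `k - 1`. As `δ > 1`, each multiplicity for `δ`
is `0` or `1`, and it is `1` precisely on the Beatty sequence of `δ`. -/

lemma floor_mul_eq_iff_ceil_le {γ : ℝ} (hγ : 0 < γ) {m : ℤ} (hm : 0 < m) (n : ℕ) :
    (0 < n ∧ ⌊(n : ℝ) * γ⌋ = m) ↔ ⌈(m : ℝ) / γ⌉ ≤ n ∧ (n : ℤ) < ⌈((m : ℝ) + 1) / γ⌉ := by
  rw [Int.ceil_le, Int.lt_ceil, div_le_iff₀ hγ, lt_div_iff₀ hγ, Int.floor_eq_iff, Int.cast_natCast]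
  refine ⟨And.right, fun h => ⟨?_, h⟩⟩
  have hpos : (0 : ℝ) < n * γ := lt_of_lt_of_le (by exact_mod_cast hm) h.1
  exact_mod_cast pos_of_mul_pos_left hpos hγ.le

lemma ncard_setOf_floor_mul_eq {γ : ℝ} (hγ : 0 < γ) {m : ℤ} (hm : 0 < m) :
    ({n : ℕ | 0 < n ∧ ⌊(n : ℝ) * γ⌋ = m}.ncard : ℤ) = ⌈((m : ℝ) + 1) / γ⌉ - ⌈(m : ℝ) / γ⌉ := by
  have hA : 0 ≤ ⌈(m : ℝ) / γ⌉ := Int.ceil_nonneg (by positivity)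
  have hAB : ⌈(m : ℝ) / γ⌉ ≤ ⌈((m : ℝ) + 1) / γ⌉ := Int.ceil_mono (by gcongr; linarith)
  have hset : {n : ℕ | 0 < n ∧ ⌊(n : ℝ) * γ⌋ = m} =
      Finset.Ico ⌈(m : ℝ) / γ⌉.toNat ⌈((m : ℝ) + 1) / γ⌉.toNat := by
    ext n
    simp [floor_mul_eq_iff_ceil_le hγ hm, Int.toNat_le, Int.lt_toNat]
  rw [hset, Set.ncard_coe_finset, Nat.card_Ico]
  omega

lemma exists_floor_mul_eq_iff {γ : ℝ} (hγ : 0 < γ) {m : ℤ} (hm : 0 < m) :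
    (∃ n : ℕ, 0 < n ∧ m = ⌊(n : ℝ) * γ⌋) ↔ ⌈(m : ℝ) / γ⌉ < ⌈((m : ℝ) + 1) / γ⌉ := by
  simp_rw [eq_comm (a := m), floor_mul_eq_iff_ceil_le hγ hm]
  refine ⟨fun ⟨n, hlo, hhi⟩ => hlo.trans_lt hhi, fun h => ⟨⌈(m : ℝ) / γ⌉.toNat, ?_⟩⟩
  have hA : 0 ≤ ⌈(m : ℝ) / γ⌉ := Int.ceil_nonneg (by positivity)
  rw [Int.toNat_of_nonneg hA]
  exact ⟨le_rfl, h⟩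

lemma ceil_add_one_div_le {γ : ℝ} (hγ : 1 ≤ γ) (x : ℝ) : ⌈(x + 1) / γ⌉ ≤ ⌈x / γ⌉ + 1 := by
  rw [← Int.ceil_add_one]
  refine Int.ceil_mono ?_
  rw [add_div]
  gcongr
  exact div_le_one_of_le₀ hγ (by linarith)

open Classical in
lemma ncard_setOf_floor_mul_eq_of_one_le {γ : ℝ} (hγ : 1 ≤ γ) {m : ℤ} (hm : 0 < m) :
    {n : ℕ | 0 < n ∧ ⌊(n : ℝ) * γ⌋ = m}.ncard =
      if ∃ n : ℕ, 0 < n ∧ m = ⌊(n : ℝ) * γ⌋ then 1 else 0 := by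
  have hγ0 : 0 < γ := by linarith
  have hcount := ncard_setOf_floor_mul_eq hγ0 hm
  have hgap := ceil_add_one_div_le hγ (m : ℝ)
  split_ifs with hbeatty
  · have := (exists_floor_mul_eq_iff hγ0 hm).1 hbeatty
    omega
  · have := mt (exists_floor_mul_eq_iff hγ0 hm).2 hbeatty
    omega

lemma ncard_setOf_floor_mul_eq_of_inv_eq {c δ : ℝ} (hc : 0 < c) (hδ : 0 < δ) {j : ℤ}
    (h : c⁻¹ = j + δ⁻¹) {m : ℤ} (hm : 0 < m) :
    ({n : ℕ | 0 < n ∧ ⌊(n : ℝ) * c⌋ = m}.ncard : ℤ) =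
      j + {n : ℕ | 0 < n ∧ ⌊(n : ℝ) * δ⌋ = m}.ncard := by
  have hshift (x : ℤ) : ⌈(x : ℝ) / c⌉ = j * x + ⌈(x : ℝ) / δ⌉ := by
    rw [div_eq_mul_inv, h, mul_add, mul_comm, ← Int.cast_mul, Int.ceil_intCast_add, ← div_eq_mul_inv]
  have hshift1 := hshift (m + 1)
  push_cast at hshift1
  rw [ncard_setOf_floor_mul_eq hc hm, ncard_setOf_floor_mul_eq hδ hm, hshift, hshift1]
  ring

lemma skipping_slopes {k : ℕ} (hk : 0 < k) {α : ℝ}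
    (hα1 : (2 * (k : ℝ) - 1) / k < α) (hα2 : α < (2 * (k : ℝ) + 1) / (k + 1)) :
    0 < (2 - α) / (α - 1) ∧ 1 ≤ (2 - α) / (k * α - 2 * k + 1) ∧
      ((2 - α) / (α - 1))⁻¹ = (((k : ℤ) - 1 : ℤ) : ℝ) + ((2 - α) / (k * α - 2 * k + 1))⁻¹ := by
  have hk1 : (1 : ℝ) ≤ k := by exact_mod_cast hk
  rw [div_lt_iff₀ (by positivity)] at hα1
  rw [lt_div_iff₀ (by positivity)] at hα2
  have hden : 0 < k * α - 2 * k + 1 := by linarith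
  have hα_gt : 1 < α := by nlinarith
  have hα_lt : α < 2 := by nlinarith
  refine ⟨div_pos (by linarith) (by linarith), (one_le_div hden).2 (by linarith), ?_⟩
  have h2α : 2 - α ≠ 0 := by linarith
  have hα1' : α - 1 ≠ 0 := by linarith
  rw [inv_div, inv_div]
  field_simp
  push_cast
  ring

theorem skipping_sequence_multiplicity_general
    (k : ℕ) (hk : 0 < k) (α : ℝ)
    (hα1 : (2 * (k : ℝ) - 1) / (k : ℝ) < α)
    (hα2 : α < (2 * (k : ℝ) + 1) / ((k : ℝ) + 1))
    (c δ : ℝ) (hc : c = (2 - α) / (α - 1))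
    (hδ : δ = (2 - α) / ((k : ℝ) * α - 2 * (k : ℝ) + 1)) :
    ∀ m : ℤ, 0 < m →
      ((∃ n : ℕ, 0 < n ∧ m = ⌊(n : ℝ) * δ⌋) →
        {n : ℕ | 0 < n ∧ ⌊(n : ℝ) * c⌋ = m}.ncard = k) ∧
      (¬ (∃ n : ℕ, 0 < n ∧ m = ⌊(n : ℝ) * δ⌋) →
        {n : ℕ | 0 < n ∧ ⌊(n : ℝ) * c⌋ = m}.ncard = k - 1) := by
  intro m hm
  obtain ⟨hc0, hδ1, hinv⟩ := skipping_slopes hk hα1 hα2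
  subst hc hδ
  have hcount := ncard_setOf_floor_mul_eq_of_inv_eq hc0 (by linarith) hinv hm
  rw [ncard_setOf_floor_mul_eq_of_one_le hδ1 hm] at hcount
  constructor
  · intro hbeatty
    rw [if_pos hbeatty] at hcount
    omega
  · intro hbeatty
    rw [if_neg hbeatty] at hcount
    omega

theorem skipping_sequence_multiplicity
    (k : ℕ) (hk : 0 < k) (α : ℝ) (hαirr : Irrational α)
    (hα1 : (2 * (k : ℝ) - 1) / (k : ℝ) < α)
    (hα2 : α < (2 * (k : ℝ) + 1) / ((k : ℝ) + 1))
    (c δ : ℝ) (hc : c = (2 - α) / (α - 1))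
    (hδ : δ = (2 - α) / ((k : ℝ) * α - 2 * (k : ℝ) + 1)) :
    ∀ m : ℤ, 0 < m →
      ((∃ n : ℕ, 0 < n ∧ m = ⌊(n : ℝ) * δ⌋) →
        {n : ℕ | 0 < n ∧ ⌊(n : ℝ) * c⌋ = m}.ncard = k) ∧
      (¬ (∃ n : ℕ, 0 < n ∧ m = ⌊(n : ℝ) * δ⌋) →
        {n : ℕ | 0 < n ∧ ⌊(n : ℝ) * c⌋ = m}.ncard = k - 1) :=
  skipping_sequence_multiplicity_general k hk α hα1 hα2 c δ hc hδ
end
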